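/- Let n ≥ 1 and p an odd positive integer. Define T on C¹-functions on a suitable invariant interval by (Tf)(t) = cos²(πt/n)·f(t/(2n)) + sin²(πt/n)·f(t/(2n) + p/4). If p < 2(2n−1)/π, then max|(Tf)'| ≤ ((πp)/(4n) + 1/(2n))·max|f'| with (πp)/(4n) + 1/(2n) < 1, so T is strictly contractive in the seminorm max|f'|. -/

import Mathlib

open Real Set

/-!
Differentiating `T f = twoScaleOp n p f` splits `(T f)'(t)` into
`(π/n) sin(2πt/n) (f(t/(2n) + p/4) - f(t/(2n)))`, coming from the trigonometric weights, plus `(1/(2n))` times a convex combination of values of `f'`.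
The mean value theorem bounds the first term by `(π/n) · (p/4) · max|f'|` and the second by
`max|f'| / (2n)`; the hypothesis `p < 2(2n-1)/π` is exactly `π p/(4n) + 1/(2n) < 1`.
-/

noncomputable def twoScaleOp (n p : ℝ) (f : ℝ → ℝ) (t : ℝ) : ℝ :=
  cos (π * t / n) ^ 2 * f (t / (2 * n)) + sin (π * t / n) ^ 2 * f (t / (2 * n) + p / 4)

noncomputable def twoScaleOpDeriv (n p : ℝ) (f f' : ℝ → ℝ) (t : ℝ) : ℝ :=
  π / n * sin (2 * (π * t / n)) * (f (t / (2 * n) + p / 4) - f (t / (2 * n)))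
    + 1 / (2 * n) * (cos (π * t / n) ^ 2 * f' (t / (2 * n))
      + sin (π * t / n) ^ 2 * f' (t / (2 * n) + p / 4))

lemma twoScale_factor_lt_one {n p : ℝ} (hn : 0 < n) (hpn : p < 2 * (2 * n - 1) / π) :
    π * p / (4 * n) + 1 / (2 * n) < 1 := by
  have hpπ : p * π < 2 * (2 * n - 1) := (lt_div_iff₀ pi_pos).mp hpn
  rw [div_add_div _ _ (by positivity) (by positivity), div_lt_one (by positivity)]
  nlinarith

lemma abs_cos_sq_mul_add_sin_sq_mul_le {x u v C : ℝ} (hu : |u| ≤ C) (hv : |v| ≤ C) :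
    |cos x ^ 2 * u + sin x ^ 2 * v| ≤ C :=
  calc |cos x ^ 2 * u + sin x ^ 2 * v|
      ≤ cos x ^ 2 * |u| + sin x ^ 2 * |v| :=
        (abs_add_le _ _).trans_eq (by rw [abs_mul, abs_mul, abs_pow, abs_pow, sq_abs, sq_abs])
    _ ≤ cos x ^ 2 * C + sin x ^ 2 * C := by gcongr
    _ = C := by rw [← add_mul, cos_sq_add_sin_sq, one_mul]

lemma hasDerivWithinAt_twoScaleOp {n p : ℝ} {f f' : ℝ → ℝ} {s : Set ℝ} {t : ℝ}
    (hf₀ : HasDerivWithinAt f (f' (t / (2 * n))) s (t / (2 * n)))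
    (hf₁ : HasDerivWithinAt f (f' (t / (2 * n) + p / 4)) s (t / (2 * n) + p / 4))
    (hs₀ : MapsTo (· / (2 * n)) s s) (hs₁ : MapsTo (· / (2 * n) + p / 4) s s) :
    HasDerivWithinAt (twoScaleOp n p f) (twoScaleOpDeriv n p f f' t) s t := by
  have harg : HasDerivAt (fun x => π * x / n) (π / n) t := by
    simpa using ((hasDerivAt_id t).const_mul π).div_const n
  have hcos := ((hasDerivAt_cos _).comp t harg).fun_pow 2
  have hsin := ((hasDerivAt_sin _).comp t harg).fun_pow 2
  have hscale : HasDerivWithinAt (· / (2 * n)) (1 / (2 * n)) s t := by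
    simpa using ((hasDerivAt_id t).div_const (2 * n)).hasDerivWithinAt
  have hcomp₀ := hf₀.comp t hscale hs₀
  have hcomp₁ := hf₁.comp t (hscale.add_const (p / 4)) hs₁
  refine ((hcos.hasDerivWithinAt.mul hcomp₀).add (hsin.hasDerivWithinAt.mul hcomp₁)).congr_deriv ?_
  simp only [twoScaleOpDeriv, Function.comp_apply, sin_two_mul]
  ring

lemma abs_twoScaleOpDeriv_le {n p C : ℝ} (hn : 0 < n) {f f' : ℝ → ℝ} {t : ℝ}
    (hΔ : |f (t / (2 * n) + p / 4) - f (t / (2 * n))| ≤ C * (p / 4))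
    (hf'₀ : |f' (t / (2 * n))| ≤ C) (hf'₁ : |f' (t / (2 * n) + p / 4)| ≤ C) :
    |twoScaleOpDeriv n p f f' t| ≤ (π * p / (4 * n) + 1 / (2 * n)) * C := by
  have hsin : |π / n * sin (2 * (π * t / n))| ≤ π / n := by
    rw [abs_mul, abs_of_pos (by positivity)]
    exact mul_le_of_le_one_right (by positivity) (abs_sin_le_one _)
  calc |twoScaleOpDeriv n p f f' t|
      ≤ π / n * (C * (p / 4)) + 1 / (2 * n) * C := by
        refine (abs_add_le _ _).trans (add_le_add ?_ ?_)
        · rw [abs_mul]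
          exact mul_le_mul hsin hΔ (abs_nonneg _) (by positivity)
        · rw [abs_mul, abs_of_pos (by positivity)]
          gcongr
          exact abs_cos_sq_mul_add_sin_sq_mul_le hf'₀ hf'₁
    _ = (π * p / (4 * n) + 1 / (2 * n)) * C := by ring

theorem stmt13 (n : ℕ) (hn : 1 ≤ n) (p : ℕ)
    (hpn : (p : ℝ) < 2 * (2 * n - 1) / π)
    (a b : ℝ)
    (hJ0 : ∀ t ∈ Set.Icc a b, t / (2 * n) ∈ Set.Icc a b)
    (hJp : ∀ t ∈ Set.Icc a b, t / (2 * n) + p / 4 ∈ Set.Icc a b)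
    (f f' : ℝ → ℝ) (C : ℝ)
    (hf : ∀ t ∈ Set.Icc a b, HasDerivWithinAt f (f' t) (Set.Icc a b) t)
    (hC : ∀ t ∈ Set.Icc a b, |f' t| ≤ C) :
    (π * p / (4 * n) + 1 / (2 * n) < 1) ∧
    ∃ g : ℝ → ℝ, ∀ t ∈ Set.Icc a b,
      HasDerivWithinAt
        (fun s => Real.cos (π * s / n) ^ 2 * f (s / (2 * n))
          + Real.sin (π * s / n) ^ 2 * f (s / (2 * n) + p / 4))
        (g t) (Set.Icc a b) t ∧
      |g t| ≤ (π * p / (4 * n) + 1 / (2 * n)) * C := by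
  have hn₀ : (0 : ℝ) < n := by exact_mod_cast hn
  refine ⟨twoScale_factor_lt_one hn₀ hpn, twoScaleOpDeriv n p f f', fun t ht => ⟨?_, ?_⟩⟩
  · exact hasDerivWithinAt_twoScaleOp (hf _ (hJ0 t ht)) (hf _ (hJp t ht)) hJ0 hJp
  · have hΔ := (convex_Icc a b).norm_image_sub_le_of_norm_hasDerivWithin_le hf hC
      (hJ0 t ht) (hJp t ht)
    refine abs_twoScaleOpDeriv_le hn₀ ?_ (hC _ (hJ0 t ht)) (hC _ (hJp t ht))
    simpa [abs_of_nonneg (by positivity : (0 : ℝ) ≤ p / 4)] using hΔ
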